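/- Let γ ≥ 0 and suppose A⁺, A⁻ : D → ℂ^{N×N} are continuous on a neighborhood D of 0 in ℂ with expansions A^±(z) = A₀ + A₁ z + Ã₂ z² log|z| + (∓ i 4π²/c² + A₂) z² + O(|z|³) as z → 0, where A₀, A₁, A₂, Ã₂ are fixed matrices. If Ω I − γ A₀ is invertible, then (z − Ω + γA⁺(z))⁻¹ − (z − Ω + γA⁻(z))⁻¹ = (i γ 8π²/c²) z² (Ω I − γ A₀)⁻² + o(|z|²) as z → 0. -/

import Mathlib

/-!
Put `F±(z) = (z - Ω) I + γ A±(z)`. Both tend to `-(Ω I - γ A₀)`, which is invertible, so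
`F±(z)⁻¹` stay bounded and `F⁺(z)⁻¹ F⁻(z)⁻¹ → (Ω I - γ A₀)⁻²`. By the resolvent identity
`F⁺⁻¹ - F⁻⁻¹ = F⁺⁻¹ (F⁻ - F⁺) F⁻⁻¹`, and in `F⁻ - F⁺ = γ (A⁻ - A⁺) = iγ(8π²/c²) z² I + O(|z|³)`
everything except the `±` term cancels; the logarithmic term only enters through
`z² log|z| → 0`.
-/

open Matrix Filter Asymptotics Topology

attribute [local instance] Matrix.normedAddCommGroup Matrix.normedSpace

namespace Matrix

variable {l m n α β : Type*} [Fintype l] [Fintype m] [Fintype n]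

section NormedRing

variable [NormedRing α]

-- The entrywise sup norm is not submultiplicative, hence the factor `card m`.
theorem norm_mul_le_card_mul (A : Matrix l m α) (B : Matrix m n α) :
    ‖A * B‖ ≤ Fintype.card m * ‖A‖ * ‖B‖ := by
  rw [norm_le_iff (by positivity)]
  intro i j
  calc ‖(A * B) i j‖ ≤ ∑ k, ‖A i k * B k j‖ := by rw [mul_apply]; exact norm_sum_le _ _
    _ ≤ ∑ _k : m, ‖A‖ * ‖B‖ := by
        gcongr with k
        exact (norm_mul_le _ _).trans (mul_le_mul (norm_entry_le_entrywise_sup_norm A)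
          (norm_entry_le_entrywise_sup_norm B) (norm_nonneg _) (norm_nonneg _))
    _ = Fintype.card m * ‖A‖ * ‖B‖ := by simp [mul_assoc]

theorem isBigO_mul_norm_mul (F : Filter β) (f : β → Matrix l m α) (g : β → Matrix m n α) :
    (fun x => f x * g x) =O[F] fun x => ‖f x‖ * ‖g x‖ :=
  IsBigO.of_bound (Fintype.card m) <| Eventually.of_forall fun x => by
    rw [Real.norm_of_nonneg (by positivity), ← mul_assoc]
    exact norm_mul_le_card_mul _ _

variable {F : Filter β} {f : β → Matrix l m α} {g : β → Matrix m n α} {k₁ k₂ : β → ℝ}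

theorem _root_.Asymptotics.IsBigO.matrix_mul_isLittleO (hf : f =O[F] k₁) (hg : g =o[F] k₂) :
    (fun x => f x * g x) =o[F] fun x => k₁ x * k₂ x :=
  (isBigO_mul_norm_mul F f g).trans_isLittleO (hf.norm_left.mul_isLittleO hg.norm_left)

theorem _root_.Asymptotics.IsLittleO.matrix_mul_isBigO (hf : f =o[F] k₁) (hg : g =O[F] k₂) :
    (fun x => f x * g x) =o[F] fun x => k₁ x * k₂ x :=
  (isBigO_mul_norm_mul F f g).trans_isLittleO (hf.norm_left.mul_isBigO hg.norm_left)

end NormedRing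

variable [DecidableEq n]

theorem inv_neg [CommRing α] (A : Matrix n n α) : (-A)⁻¹ = -A⁻¹ := by
  by_cases hA : IsUnit A.det
  · exact inv_eq_right_inv (by rw [neg_mul_neg, mul_nonsing_inv _ hA])
  · have hnA : ¬IsUnit (-A).det := by
      rwa [← isUnit_iff_isUnit_det, IsUnit.neg_iff, isUnit_iff_isUnit_det]
    rw [nonsing_inv_apply_not_isUnit _ hA, nonsing_inv_apply_not_isUnit _ hnA, neg_zero]

variable [NormedField α] {F : Filter β}

theorem _root_.Filter.Tendsto.matrix_inv {f : β → Matrix n n α} {M : Matrix n n α}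
    (hf : Tendsto f F (𝓝 M)) (hM : IsUnit M) : Tendsto (fun x => (f x)⁻¹) F (𝓝 M⁻¹) := by
  have hdet : M.det ≠ 0 := ((isUnit_iff_isUnit_det M).mp hM).ne_zero
  refine (continuousAt_matrix_inv M ?_).tendsto.comp hf
  rw [Ring.inverse_eq_inv']
  exact continuousAt_inv₀ hdet

theorem _root_.Filter.Tendsto.eventually_isUnit_matrix {f : β → Matrix n n α}
    {M : Matrix n n α} (hf : Tendsto f F (𝓝 M)) (hM : IsUnit M) : ∀ᶠ x in F, IsUnit (f x) :=
  (((continuous_id.matrix_det.tendsto M).comp hf).eventually_ne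
    ((isUnit_iff_isUnit_det M).mp hM).ne_zero).mono fun _ hx =>
      (isUnit_iff_isUnit_det _).mpr (isUnit_iff_ne_zero.mpr hx)

theorem inv_sub_inv_sub_smul_inv_sq_isLittleO {f g : β → Matrix n n α} {M : Matrix n n α}
    (hM : IsUnit M) (hf : Tendsto f F (𝓝 M)) (hg : Tendsto g F (𝓝 M)) {κ : β → α}
    {k : β → ℝ} (hκ : κ =O[F] k) (hfg : (fun x => g x - f x - κ x • 1) =o[F] k) :
    (fun x => (f x)⁻¹ - (g x)⁻¹ - κ x • M⁻¹ ^ 2) =o[F] k := by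
  have hfinv := hf.matrix_inv hM
  have hginv := hg.matrix_inv hM
  have hsplit : (fun x => κ x • ((f x)⁻¹ * (g x)⁻¹ - M⁻¹ ^ 2) +
      (f x)⁻¹ * (g x - f x - κ x • 1) * (g x)⁻¹) =ᶠ[F]
      fun x => (f x)⁻¹ - (g x)⁻¹ - κ x • M⁻¹ ^ 2 := by
    filter_upwards [hf.eventually_isUnit_matrix hM, hg.eventually_isUnit_matrix hM]
      with x hfx hgx
    rw [inv_sub_inv (iff_of_true hfx hgx)]
    simp only [mul_sub, sub_mul, smul_sub, mul_smul_comm, smul_mul_assoc, mul_one]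
    abel
  have hprod : Tendsto (fun x => (f x)⁻¹ * (g x)⁻¹) F (𝓝 (M⁻¹ ^ 2)) := by
    simpa only [sq] using hfinv.mul hginv
  have hlead : (fun x => κ x • ((f x)⁻¹ * (g x)⁻¹ - M⁻¹ ^ 2)) =o[F] k := by
    simpa using hκ.smul_isLittleO ((isLittleO_one_iff ℝ).2 (tendsto_sub_nhds_zero_iff.2 hprod))
  have hrem : (fun x => (f x)⁻¹ * (g x - f x - κ x • 1) * (g x)⁻¹) =o[F] k := by
    simpa using ((hfinv.isBigO_one ℝ).matrix_mul_isLittleO hfg).matrix_mul_isBigO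
      (hginv.isBigO_one ℝ)
  exact (hlead.add hrem).congr' hsplit EventuallyEq.rfl

end Matrix

theorem tendsto_sq_mul_log_norm_nhds_zero :
    Tendsto (fun z : ℂ => z ^ 2 * (Real.log ‖z‖ : ℂ)) (𝓝 0) (𝓝 0) := by
  rw [tendsto_zero_iff_norm_tendsto_zero]
  have hcont : Continuous fun z : ℂ => ‖z‖ * |‖z‖ * Real.log ‖z‖| :=
    continuous_norm.mul (Real.continuous_mul_log.comp continuous_norm).abs
  have hlim := hcont.tendsto 0
  rw [norm_zero, zero_mul] at hlim
  refine hlim.congr fun z => ?_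
  rw [norm_mul, norm_pow, Complex.norm_real, Real.norm_eq_abs, abs_mul, abs_norm]
  ring

theorem tendsto_of_isBigO_sub_expansion {E : Type*} [NormedAddCommGroup E] [NormedSpace ℂ E]
    {A : ℂ → E} {A₀ A₁ Ã₂ C : E}
    (h : (fun z : ℂ => A z - (A₀ + z • A₁ + (z ^ 2 * (Real.log ‖z‖ : ℂ)) • Ã₂ + z ^ 2 • C))
      =O[𝓝[≠] 0] fun z : ℂ => ‖z‖ ^ 3) :
    Tendsto A (𝓝[≠] 0) (𝓝 A₀) := by
  have hexp : Tendsto (fun z : ℂ => A₀ + z • A₁ + (z ^ 2 * (Real.log ‖z‖ : ℂ)) • Ã₂ + z ^ 2 • C)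
      (𝓝 0) (𝓝 A₀) := by
    simpa using ((tendsto_const_nhds.add (tendsto_id.smul_const A₁)).add
      (tendsto_sq_mul_log_norm_nhds_zero.smul_const Ã₂)).add ((tendsto_id.pow 2).smul_const C)
  have hcube : Tendsto (fun z : ℂ => ‖z‖ ^ 3) (𝓝[≠] 0) (𝓝 0) := by
    simpa using (tendsto_norm_zero.mono_left nhdsWithin_le_nhds).pow 3
  simpa using (h.trans_tendsto hcube).add (hexp.mono_left nhdsWithin_le_nhds)

theorem resolvent_difference_asymptotics_general (N : ℕ) (Ω c γ : ℝ)
    (Ap Am : ℂ → Matrix (Fin N) (Fin N) ℂ)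
    (A0 A1 A2 At2 : Matrix (Fin N) (Fin N) ℂ)
    (hp : (fun z : ℂ => Ap z - (A0 + z • A1 +
        ((z ^ 2 * (Real.log ‖z‖ : ℂ)) • At2) +
        (z ^ 2) • (A2 + (-(Complex.I) * (4 * (Real.pi : ℂ) ^ 2 / (c : ℂ) ^ 2)) • 1)))
      =O[nhdsWithin 0 {(0 : ℂ)}ᶜ] fun z : ℂ => ‖z‖ ^ 3)
    (hm : (fun z : ℂ => Am z - (A0 + z • A1 +
        ((z ^ 2 * (Real.log ‖z‖ : ℂ)) • At2) +
        (z ^ 2) • (A2 + (Complex.I * (4 * (Real.pi : ℂ) ^ 2 / (c : ℂ) ^ 2)) • 1)))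
      =O[nhdsWithin 0 {(0 : ℂ)}ᶜ] fun z : ℂ => ‖z‖ ^ 3)
    (hinv : IsUnit ((Ω : ℂ) • (1 : Matrix (Fin N) (Fin N) ℂ) - (γ : ℂ) • A0)) :
    (fun z : ℂ =>
        ((z - (Ω : ℂ)) • (1 : Matrix (Fin N) (Fin N) ℂ) + (γ : ℂ) • Ap z)⁻¹ -
        ((z - (Ω : ℂ)) • (1 : Matrix (Fin N) (Fin N) ℂ) + (γ : ℂ) • Am z)⁻¹ -
        (Complex.I * (γ : ℂ) * 8 * (Real.pi : ℂ) ^ 2 / (c : ℂ) ^ 2 * z ^ 2) •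
          (((Ω : ℂ) • (1 : Matrix (Fin N) (Fin N) ℂ) - (γ : ℂ) • A0)⁻¹ ^ 2))
      =o[nhdsWithin 0 {(0 : ℂ)}ᶜ] fun z : ℂ => ‖z‖ ^ 2 := by
  set B : Matrix (Fin N) (Fin N) ℂ := (Ω : ℂ) • 1 - (γ : ℂ) • A0
  have hF : ∀ A : ℂ → Matrix (Fin N) (Fin N) ℂ, Tendsto A (𝓝[≠] 0) (𝓝 A0) →
      Tendsto (fun z : ℂ => (z - (Ω : ℂ)) • (1 : Matrix (Fin N) (Fin N) ℂ) + (γ : ℂ) • A z)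
        (𝓝[≠] 0) (𝓝 (-B)) := fun A hA => by
    rw [show -B = ((0 : ℂ) - Ω) • (1 : Matrix (Fin N) (Fin N) ℂ) + (γ : ℂ) • A0 by module]
    exact (((tendsto_id.mono_left nhdsWithin_le_nhds).sub_const _).smul_const _).add
      (hA.const_smul _)
  have hκ : (fun z : ℂ => Complex.I * γ * 8 * Real.pi ^ 2 / c ^ 2 * z ^ 2)
      =O[𝓝[≠] 0] fun z : ℂ => ‖z‖ ^ 2 := by
    simpa only [← norm_pow] using
      (isBigO_refl (fun z : ℂ => z ^ 2) _).norm_right.const_mul_left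
        (Complex.I * γ * 8 * Real.pi ^ 2 / c ^ 2)
  have hR : (fun z : ℂ => ((z - Ω) • 1 + (γ : ℂ) • Am z) - ((z - Ω) • 1 + (γ : ℂ) • Ap z) -
      (Complex.I * γ * 8 * Real.pi ^ 2 / c ^ 2 * z ^ 2) • (1 : Matrix (Fin N) (Fin N) ℂ))
      =o[𝓝[≠] 0] fun z : ℂ => ‖z‖ ^ 2 := by
    refine (((hm.sub hp).const_smul_left (γ : ℂ)).trans_isLittleO
      ((isLittleO_norm_pow_norm_pow (by norm_num)).mono nhdsWithin_le_nhds)).congr_left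
      fun z => ?_
    rw [Pi.smul_apply]
    module
  simpa only [Matrix.inv_neg, neg_sq] using
    Matrix.inv_sub_inv_sub_smul_inv_sq_isLittleO hinv.neg
      (hF Ap (tendsto_of_isBigO_sub_expansion hp)) (hF Am (tendsto_of_isBigO_sub_expansion hm))
      hκ hR

/-- If `A^±(z) = A₀ + A₁z + Ã₂ z² log|z| + (∓i4π²/c² + A₂)z² + O(|z|³)` near `0`
and `ΩI − γA₀` is invertible, then
`(z−Ω+γA⁺(z))⁻¹ − (z−Ω+γA⁻(z))⁻¹ = (iγ8π²/c²) z² (ΩI−γA₀)⁻² + o(|z|²)` as `z → 0`. -/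
theorem resolvent_difference_asymptotics (N : ℕ) (Ω c γ : ℝ)
    (hΩ : 0 < Ω) (hc : 0 < c) (hγ : 0 ≤ γ)
    (D : Set ℂ) (hD : D ∈ nhds (0 : ℂ))
    (Ap Am : ℂ → Matrix (Fin N) (Fin N) ℂ)
    (hApc : ContinuousOn Ap D) (hAmc : ContinuousOn Am D)
    (A0 A1 A2 At2 : Matrix (Fin N) (Fin N) ℂ)
    (hp : (fun z : ℂ => Ap z - (A0 + z • A1 +
        ((z ^ 2 * (Real.log ‖z‖ : ℂ)) • At2) +
        (z ^ 2) • (A2 + (-(Complex.I) * (4 * (Real.pi : ℂ) ^ 2 / (c : ℂ) ^ 2)) • 1)))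
      =O[nhdsWithin 0 {(0 : ℂ)}ᶜ] fun z : ℂ => ‖z‖ ^ 3)
    (hm : (fun z : ℂ => Am z - (A0 + z • A1 +
        ((z ^ 2 * (Real.log ‖z‖ : ℂ)) • At2) +
        (z ^ 2) • (A2 + (Complex.I * (4 * (Real.pi : ℂ) ^ 2 / (c : ℂ) ^ 2)) • 1)))
      =O[nhdsWithin 0 {(0 : ℂ)}ᶜ] fun z : ℂ => ‖z‖ ^ 3)
    (hinv : IsUnit ((Ω : ℂ) • (1 : Matrix (Fin N) (Fin N) ℂ) - (γ : ℂ) • A0)) :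
    (fun z : ℂ =>
        ((z - (Ω : ℂ)) • (1 : Matrix (Fin N) (Fin N) ℂ) + (γ : ℂ) • Ap z)⁻¹ -
        ((z - (Ω : ℂ)) • (1 : Matrix (Fin N) (Fin N) ℂ) + (γ : ℂ) • Am z)⁻¹ -
        (Complex.I * (γ : ℂ) * 8 * (Real.pi : ℂ) ^ 2 / (c : ℂ) ^ 2 * z ^ 2) •
          (((Ω : ℂ) • (1 : Matrix (Fin N) (Fin N) ℂ) - (γ : ℂ) • A0)⁻¹ ^ 2))
      =o[nhdsWithin 0 {(0 : ℂ)}ᶜ] fun z : ℂ => ‖z‖ ^ 2 :=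
  resolvent_difference_asymptotics_general N Ω c γ Ap Am A0 A1 A2 At2 hp hm hinv
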